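/- Let A₁, A₂ : ℝ → ℂ be differentiable functions satisfying the ODE system i Aⱼ' = Fⱼ(A₁,A₂) for j=1,2, where F₁, F₂ are general real-coefficient cubic gauge-invariant nonlinearities with associated 3×3 real matrix 𝒜. Set ρ₁=|A₁|², ρ₂=|A₂|², R=2Re(conj(A₁)A₂), I=2Im(conj(A₁)A₂). Then for any (a,b,c) ∈ ℝ³: d/dt [a ρ₁ + b R + c ρ₂] = I · (ρ₁, R, ρ₂) · 𝒜 · (a,b,c)ᵀ. -/

import Mathlib

/-!
Each of ρ₁, R, ρ₂ is the real part of a product conj(Aⱼ) Aₖ, whose derivative is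
conj(Aⱼ') Aₖ + conj(Aⱼ) Aₖ'. Substituting Aⱼ' = -i Fⱼ(A₁, A₂) makes the derivative of
a ρ₁ + b R + c ρ₂ a cubic polynomial in the real and imaginary parts of A₁, A₂; gauge invariance
of the Fⱼ makes every monomial carry a factor I, and the cofactor is read off as (ρ₁, R, ρ₂) 𝒜.
-/

open Matrix

/-- The general gauge-invariant cubic nonlinearity with six real coefficients. -/
noncomputable def Fcub (m₁ m₂ m₃ m₄ m₅ m₆ : ℝ) (u₁ u₂ : ℂ) : ℂ :=
  ((m₁ * Complex.normSq u₁ : ℝ) : ℂ) * u₁ + ((m₂ * Complex.normSq u₁ : ℝ) : ℂ) * u₂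
    + (m₃ : ℂ) * u₁ ^ 2 * (starRingEnd ℂ) u₂ + ((m₄ * Complex.normSq u₂ : ℝ) : ℂ) * u₁
    + (m₅ : ℂ) * u₂ ^ 2 * (starRingEnd ℂ) u₁ + ((m₆ * Complex.normSq u₂ : ℝ) : ℂ) * u₂

/-- The matrix part of the matrix-vector representation of the cubic system. -/
def Amat (l₁ l₂ l₃ l₄ l₅ l₆ l₇ l₈ l₉ l₁₀ l₁₁ l₁₂ : ℝ) : Matrix (Fin 3) (Fin 3) ℝ :=
  !![l₂ - l₃, -l₁ + l₈ - l₉, -l₇;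
     l₅, -l₃ + l₁₁, -l₉;
     l₆, -l₄ + l₅ + l₁₂, -l₁₀ + l₁₁]

open ComplexConjugate

section
variable {u v : ℝ → ℂ} {u' v' : ℂ} {t : ℝ}

theorem HasDerivAt.re_conj_mul (hu : HasDerivAt u u' t) (hv : HasDerivAt v v' t) :
    HasDerivAt (fun s => (conj (u s) * v s).re) ((conj u' * v t + conj (u t) * v').re) t :=
  Complex.reCLM.hasFDerivAt.comp_hasDerivAt t (hu.star.mul hv)

theorem Complex.re_conj_mul_self (z : ℂ) : (conj z * z).re = Complex.normSq z := by
  rw [← Complex.normSq_eq_conj_mul_self, Complex.ofReal_re]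

theorem HasDerivAt.normSq (hu : HasDerivAt u u' t) :
    HasDerivAt (fun s => Complex.normSq (u s)) (2 * (conj (u t) * u').re) t := by
  have h := hu.re_conj_mul hu
  simp only [Complex.re_conj_mul_self] at h
  convert h using 1
  simp only [Complex.add_re, Complex.mul_re, Complex.conj_re, Complex.conj_im]
  ring

end

theorem cubic_observable_deriv_eq (l₁ l₂ l₃ l₄ l₅ l₆ l₇ l₈ l₉ l₁₀ l₁₁ l₁₂ a b c : ℝ)
    {u₁ u₂ v₁ v₂ : ℂ} (hv₁ : Complex.I * v₁ = Fcub l₁ l₂ l₃ l₄ l₅ l₆ u₁ u₂)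
    (hv₂ : Complex.I * v₂ = Fcub l₇ l₈ l₉ l₁₀ l₁₁ l₁₂ u₁ u₂) :
    a * (2 * (conj u₁ * v₁).re) + b * (2 * (conj v₁ * u₂ + conj u₁ * v₂).re)
        + c * (2 * (conj u₂ * v₂).re)
      = 2 * (conj u₁ * u₂).im * (![Complex.normSq u₁, 2 * (conj u₁ * u₂).re, Complex.normSq u₂] ⬝ᵥ
          Amat l₁ l₂ l₃ l₄ l₅ l₆ l₇ l₈ l₉ l₁₀ l₁₁ l₁₂ *ᵥ ![a, b, c]) := by
  have eq_neg_I_mul {v F : ℂ} (h : Complex.I * v = F) : v = -Complex.I * F := by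
    rw [← h, ← mul_assoc, neg_mul, Complex.I_mul_I]; ring
  rw [eq_neg_I_mul hv₁, eq_neg_I_mul hv₂]
  simp only [Amat, Fcub, Matrix.mulVec, dotProduct, Fin.sum_univ_three,
    Matrix.cons_val_zero, Matrix.cons_val_one, Matrix.cons_val_two, Matrix.head_cons,
    Matrix.tail_cons, Matrix.head_fin_const, Matrix.of_apply, Matrix.cons_val', Matrix.empty_val',
    Matrix.cons_val_fin_one,
    Complex.add_re, Complex.add_im, Complex.mul_re, Complex.mul_im, Complex.neg_re, Complex.neg_im,
    Complex.I_re, Complex.I_im, Complex.ofReal_re, Complex.ofReal_im, Complex.conj_re,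
    Complex.conj_im, Complex.normSq_apply, pow_two]
  ring

theorem stmt4 (l₁ l₂ l₃ l₄ l₅ l₆ l₇ l₈ l₉ l₁₀ l₁₁ l₁₂ : ℝ)
    (A₁ A₂ A₁' A₂' : ℝ → ℂ)
    (hd₁ : ∀ t, HasDerivAt A₁ (A₁' t) t)
    (hd₂ : ∀ t, HasDerivAt A₂ (A₂' t) t)
    (hode₁ : ∀ t, Complex.I * A₁' t = Fcub l₁ l₂ l₃ l₄ l₅ l₆ (A₁ t) (A₂ t))
    (hode₂ : ∀ t, Complex.I * A₂' t = Fcub l₇ l₈ l₉ l₁₀ l₁₁ l₁₂ (A₁ t) (A₂ t))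
    (a b c : ℝ) :
    let 𝒜 : Matrix (Fin 3) (Fin 3) ℝ := Amat l₁ l₂ l₃ l₄ l₅ l₆ l₇ l₈ l₉ l₁₀ l₁₁ l₁₂
    let ρ₁ : ℝ → ℝ := fun t => Complex.normSq (A₁ t)
    let ρ₂ : ℝ → ℝ := fun t => Complex.normSq (A₂ t)
    let R : ℝ → ℝ := fun t => 2 * ((starRingEnd ℂ) (A₁ t) * A₂ t).re
    let I : ℝ → ℝ := fun t => 2 * ((starRingEnd ℂ) (A₁ t) * A₂ t).im
    ∀ t : ℝ,
      HasDerivAt (fun s => a * ρ₁ s + b * R s + c * ρ₂ s)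
        (I t * (![ρ₁ t, R t, ρ₂ t] ⬝ᵥ 𝒜.mulVec ![a, b, c])) t := by
  intro 𝒜 ρ₁ ρ₂ R I t
  have hρ₁ := (hd₁ t).normSq
  have hρ₂ := (hd₂ t).normSq
  have hR := ((hd₁ t).re_conj_mul (hd₂ t)).const_mul 2
  rw [← cubic_observable_deriv_eq l₁ l₂ l₃ l₄ l₅ l₆ l₇ l₈ l₉ l₁₀ l₁₁ l₁₂ a b c (hode₁ t) (hode₂ t)]
  exact ((hρ₁.const_mul a).add (hR.const_mul b)).add (hρ₂.const_mul c)
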